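/- The three submodules R(e,t), R(e,f), R(e,s) pairwise intersect in exactly the set I_l × {0}; that is, R(e,t) ∩ R(e,f) = R(e,f) ∩ R(e,s) = R(e,t) ∩ R(e,s) = {(x, 0) : x ∈ I_l}, a set of 8 vectors. -/

import Mathlib

/-! For `α = m(a,b,c,d)` one has `α e = m(0,b,c,d)` and `α m(0,0,c',d') = m(0,0,ac',ad')`.
So a common element of `R(e, m(0,0,c₀,d₀))` and `R(e, m(0,0,c₁,d₁))` has second coordinate
`m(0,0,ac₀,ad₀) = m(0,0,a'c₁,a'd₁)`, which forces `a = a' = 0` as soon as `(c₀,d₀)` and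
`(c₁,d₁)` are linearly independent over GF(2), as any two of `(1,0)`, `(1,1)`, `(0,1)` are. -/

open Matrix

/-- The matrix m(a,b,c,d) = [[a,c,d],[0,b,0],[0,0,b]] over GF(2). -/
def m (a b c d : ZMod 2) : Matrix (Fin 3) (Fin 3) (ZMod 2) :=
  !![a, c, d; 0, b, 0; 0, 0, b]

lemma m_mul (a b c d a' b' c' d' : ZMod 2) :
    m a b c d * m a' b' c' d' =
      m (a * a') (b * b') (a * c' + c * b') (a * d' + d * b') := by
  ext i j
  fin_cases i <;> fin_cases j <;>
    simp [m, Matrix.mul_apply, Fin.sum_univ_three, Matrix.vecHead, Matrix.vecTail]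

/-- The ring R, as a subring of the 3×3 matrices over GF(2). -/
def Rring : Subring (Matrix (Fin 3) (Fin 3) (ZMod 2)) where
  carrier := {A | ∃ a b c d : ZMod 2, A = m a b c d}
  zero_mem' := ⟨0, 0, 0, 0, by ext i j; fin_cases i <;> fin_cases j <;> simp [m, Matrix.vecHead, Matrix.vecTail]⟩
  one_mem' := ⟨1, 1, 0, 0, by ext i j; fin_cases i <;> fin_cases j <;> simp [m, Matrix.one_apply, Matrix.vecHead, Matrix.vecTail]⟩
  add_mem' := by
    rintro A B ⟨a, b, c, d, rfl⟩ ⟨a', b', c', d', rfl⟩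
    exact ⟨a + a', b + b', c + c', d + d',
      by ext i j; fin_cases i <;> fin_cases j <;> simp [m, Matrix.vecHead, Matrix.vecTail]⟩
  neg_mem' := by
    rintro A ⟨a, b, c, d, rfl⟩
    exact ⟨-a, -b, -c, -d,
      by ext i j; fin_cases i <;> fin_cases j <;> simp [m, Matrix.vecHead, Matrix.vecTail]⟩
  mul_mem' := by
    rintro A B ⟨a, b, c, d, rfl⟩ ⟨a', b', c', d', rfl⟩
    exact ⟨a * a', b * b', a * c' + c * b', a * d' + d * b', m_mul a b c d a' b' c' d'⟩

lemma m_mem (a b c d : ZMod 2) : m a b c d ∈ Rring := ⟨a, b, c, d, rfl⟩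

/-- The element m(a,b,c,d) viewed as an element of the ring R. -/
def mm (a b c d : ZMod 2) : Rring := ⟨m a b c d, m_mem a b c d⟩

/-- The cyclic left submodule R(x,y) = {(αx, αy) : α ∈ R} of R², as a set of vectors. -/
def RM (x y : Rring) : Set (Rring × Rring) := {p | ∃ α : Rring, p = (α * x, α * y)}

def t : Rring := mm 0 0 1 0
def f : Rring := mm 0 0 1 1
def s : Rring := mm 0 0 0 1
def e : Rring := mm 0 1 0 0
def u : Rring := mm 0 1 1 0
def v : Rring := mm 0 1 1 1
def w : Rring := mm 0 1 0 1

/-- The nine distinguished generators. -/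
def gens : List (Rring × Rring) :=
  [(t, e), (f, e), (s, e), (e, u), (e, v), (e, w), (e, s), (e, f), (e, t)]

/-- The set I_l = {m(0,b,c,d) : b,c,d ∈ GF(2)}, as a subset of R. -/
def Il : Set Rring := {x | ∃ b c d : ZMod 2, x = mm 0 b c d}

lemma mm_mul (a b c d a' b' c' d' : ZMod 2) :
    mm a b c d * mm a' b' c' d' =
      mm (a * a') (b * b') (a * c' + c * b') (a * d' + d * b') :=
  Subtype.ext (m_mul a b c d a' b' c' d')

lemma mm_inj {a b c d a' b' c' d' : ZMod 2} :
    mm a b c d = mm a' b' c' d' ↔ a = a' ∧ b = b' ∧ c = c' ∧ d = d' := by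
  refine ⟨fun h => ?_, by rintro ⟨rfl, rfl, rfl, rfl⟩; rfl⟩
  have hm : m a b c d = m a' b' c' d' := congrArg Subtype.val h
  exact ⟨congrFun₂ hm 0 0, congrFun₂ hm 1 1, congrFun₂ hm 0 1, congrFun₂ hm 0 2⟩

lemma mm_zero : mm 0 0 0 0 = 0 :=
  Subtype.ext (by ext i j; fin_cases i <;> fin_cases j <;> rfl)

lemma exists_eq_mm (α : Rring) : ∃ a b c d : ZMod 2, α = mm a b c d := by
  obtain ⟨A, a, b, c, d, rfl⟩ := α
  exact ⟨a, b, c, d, rfl⟩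

lemma mm_mul_e (a b c d : ZMod 2) : mm a b c d * e = mm 0 b c d := by
  simp [e, mm_mul]

lemma mm_mul_mm_zero_zero (a b c d c' d' : ZMod 2) :
    mm a b c d * mm 0 0 c' d' = mm 0 0 (a * c') (a * d') := by
  simp [mm_mul]

lemma mem_RM_e_iff {c₀ d₀ : ZMod 2} {p : Rring × Rring} :
    p ∈ RM e (mm 0 0 c₀ d₀) ↔
      ∃ a b c d : ZMod 2, p = (mm 0 b c d, mm 0 0 (a * c₀) (a * d₀)) := by
  constructor
  · rintro ⟨α, rfl⟩
    obtain ⟨a, b, c, d, rfl⟩ := exists_eq_mm α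
    exact ⟨a, b, c, d, by rw [mm_mul_e, mm_mul_mm_zero_zero]⟩
  · rintro ⟨a, b, c, d, rfl⟩
    exact ⟨mm a b c d, by rw [mm_mul_e, mm_mul_mm_zero_zero]⟩

theorem RM_e_inter_RM_e {c₀ d₀ c₁ d₁ : ZMod 2}
    (h : LinearIndependent (ZMod 2) ![(c₀, d₀), (c₁, d₁)]) :
    RM e (mm 0 0 c₀ d₀) ∩ RM e (mm 0 0 c₁ d₁) = {p | ∃ x ∈ Il, p = (x, 0)} := by
  ext p
  simp only [Set.mem_inter_iff, mem_RM_e_iff]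
  constructor
  · rintro ⟨⟨a, b, c, d, rfl⟩, a', b', c', d', hp⟩
    obtain ⟨-, -, hc, hd⟩ := mm_inj.mp (Prod.ext_iff.mp hp).2
    have ha : a = 0 := (LinearIndependent.pair_iff.mp h a a' (by
      simp [Prod.ext_iff, CharTwo.add_eq_zero, hc, hd])).1
    exact ⟨mm 0 b c d, ⟨b, c, d, rfl⟩, by simp [ha, mm_zero]⟩
  · rintro ⟨x, ⟨b, c, d, rfl⟩, rfl⟩
    exact ⟨⟨0, b, c, d, by simp [mm_zero]⟩, 0, b, c, d, by simp [mm_zero]⟩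

lemma ncard_Il_prod_zero : {p : Rring × Rring | ∃ x ∈ Il, p = (x, 0)}.ncard = 8 := by
  have hrange : {p : Rring × Rring | ∃ x ∈ Il, p = (x, 0)} =
      Set.range fun x : ZMod 2 × ZMod 2 × ZMod 2 => (mm 0 x.1 x.2.1 x.2.2, (0 : Rring)) := by
    ext p
    constructor
    · rintro ⟨x, ⟨b, c, d, rfl⟩, rfl⟩
      exact ⟨(b, c, d), rfl⟩
    · rintro ⟨⟨b, c, d⟩, rfl⟩
      exact ⟨mm 0 b c d, ⟨b, c, d, rfl⟩, rfl⟩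
  have hinj : Function.Injective
      fun x : ZMod 2 × ZMod 2 × ZMod 2 => (mm 0 x.1 x.2.1 x.2.2, (0 : Rring)) := by
    rintro ⟨b, c, d⟩ ⟨b', c', d'⟩ h
    obtain ⟨-, rfl, rfl, rfl⟩ := mm_inj.mp (Prod.ext_iff.mp h).1
    rfl
  rw [hrange, Set.ncard_range_of_injective hinj, Nat.card_eq_fintype_card]
  rfl

/-- The submodules R(e,t), R(e,f), R(e,s) pairwise intersect in exactly the set
I_l × {0}, a set of 8 vectors. -/
theorem pairwise_intersections_third_triple :
    RM e t ∩ RM e f = {p : Rring × Rring | ∃ x ∈ Il, p = (x, 0)} ∧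
    RM e f ∩ RM e s = {p : Rring × Rring | ∃ x ∈ Il, p = (x, 0)} ∧
    RM e t ∩ RM e s = {p : Rring × Rring | ∃ x ∈ Il, p = (x, 0)} ∧
    {p : Rring × Rring | ∃ x ∈ Il, p = (x, 0)}.ncard = 8 := by
  refine ⟨RM_e_inter_RM_e ?_, RM_e_inter_RM_e ?_, RM_e_inter_RM_e ?_, ncard_Il_prod_zero⟩ <;>
    rw [LinearIndependent.pair_iff] <;> decide
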